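/- arXiv:1301.0797 — 4 statements merged into one kernel-verified Lean document; each statement's English description precedes it below -/
import Mathlib

section
/- Let X and Y be bounded normal operators on a complex Hilbert space with e^X = e^Y. Then Re(X) = Re(Y), where Re(T) = (T + T*)/2. -/
open MeasureTheory Complex ContinuousLinearMap NormedSpace

noncomputable section

variable {H : Type*} [NormedAddCommGroup H] [InnerProductSpace ℂ H] [CompleteSpace H]

/-- A projection-valued (spectral) measure on the Borel sets of `α`, acting on `H`. -/
structure IsPVM {α : Type*} [MeasurableSpace α] (E : Set α → H →L[ℂ] H) : Prop where
  selfAdjoint : ∀ Ω, IsSelfAdjoint (E Ω)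
  inter : ∀ Ω₁ Ω₂, MeasurableSet Ω₁ → MeasurableSet Ω₂ → E (Ω₁ ∩ Ω₂) = E Ω₁ * E Ω₂
  univ : E Set.univ = 1
  empty : E ∅ = 0
  countablyAdditive : ∀ f : ℕ → Set α, (∀ n, MeasurableSet (f n)) →
    Pairwise (Function.onFun Disjoint f) →
    ∀ ξ : H, HasSum (fun n => E (f n) ξ) (E (⋃ n, f n) ξ)

/-- `μ` is the diagonal scalar measure `Ω ↦ ⟪E(Ω)ξ, ξ⟫` of the PVM `E` at the vector `ξ`. -/
def IsDiagMeasure {α : Type*} [MeasurableSpace α] (E : Set α → H →L[ℂ] H) (ξ : H)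
    (μ : Measure α) : Prop :=
  ∀ Ω : Set α, MeasurableSet Ω → μ Ω = ENNReal.ofReal (inner ℂ (E Ω ξ) ξ : ℂ).re

/-- `T = ∫ f dE` in the weak (diagonal, hence by polarization full) sense; this is the
operator `f(X)` obtained from the Borel functional calculus when `E` is the spectral
measure of `X`. -/
def IsIntegralOf {α : Type*} [MeasurableSpace α] (E : Set α → H →L[ℂ] H) (f : α → ℂ)
    (T : H →L[ℂ] H) : Prop :=
  ∀ ξ : H, ∃ μ : Measure α, IsDiagMeasure E ξ μ ∧ (inner ℂ (T ξ) ξ : ℂ) = ∫ x, f x ∂μ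

/-- `E` is the spectral measure of the bounded normal operator `X`, extended to all
Borel subsets of `ℂ` by `E (Ω) = E (Ω ∩ σ(X))`. -/
def IsSpectralMeasureOf (X : H →L[ℂ] H) (E : Set ℂ → H →L[ℂ] H) : Prop :=
  IsPVM E ∧ IsIntegralOf E id X ∧
    ∀ Ω : Set ℂ, MeasurableSet Ω → E Ω = E (Ω ∩ spectrum ℂ X)

/-- The support of a PVM on `ℝ`: the spectrum of the associated (possibly unbounded)
self-adjoint operator. -/
def pvmSupport (E : Set ℝ → H →L[ℂ] H) : Set ℝ :=
  {t : ℝ | ∀ ε > 0, E (Metric.ball t ε) ≠ 0}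

/-- The commutant of a set of bounded operators. -/
def commutant (S : Set (H →L[ℂ] H)) : Set (H →L[ℂ] H) :=
  {Z : H →L[ℂ] H | ∀ T ∈ S, Z * T = T * Z}

/-!
A normal `X` commutes with `X*`, so `e^(X + X*) = e^X (e^X)*`; hence `e^X = e^Y` forces the
self-adjoint operators `X + X*` and `Y + Y*` to have the same exponential. The exponential is
injective on self-adjoint elements, being inverted there by the real logarithm of the continuous
functional calculus.
-/

theorem IsStarNormal.exp_add_star (𝕂 : Type*) {A : Type*} [RCLike 𝕂] [NormedRing A]
    [NormedAlgebra 𝕂 A] [CompleteSpace A] [StarRing A] [ContinuousStar A] {a : A}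
    (ha : IsStarNormal a) :
    NormedSpace.exp (a + star a) = NormedSpace.exp a * star (NormedSpace.exp a) := by
  have hball (x : A) : x ∈ Metric.eball 0 (expSeries 𝕂 A).radius :=
    (expSeries_radius_eq_top 𝕂 A).symm ▸ edist_lt_top _ _
  rw [star_exp, exp_add_of_commute_of_mem_ball ha.star_comm_self.symm (hball a) (hball _)]

theorem IsSelfAdjoint.exp_inj {A : Type*} [NormedRing A] [StarRing A] [NormedAlgebra ℝ A]
    [ContinuousFunctionalCalculus ℝ A IsSelfAdjoint] {a b : A} (ha : IsSelfAdjoint a)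
    (hb : IsSelfAdjoint b) (h : NormedSpace.exp a = NormedSpace.exp b) : a = b := by
  rw [← CFC.log_exp a ha, ← CFC.log_exp b hb, h]

/-- Normal `X, Y` with `e^X = e^Y` have equal real parts. -/
theorem stmt1 (X Y : H →L[ℂ] H) (hX : IsStarNormal X) (hY : IsStarNormal Y)
    (h : NormedSpace.exp X = NormedSpace.exp Y) :
    (2⁻¹ : ℂ) • (X + adjoint X) = (2⁻¹ : ℂ) • (Y + adjoint Y) := by
  simp only [← star_eq_adjoint]
  have hexp : NormedSpace.exp (X + star X) = NormedSpace.exp (Y + star Y) := by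
    rw [hX.exp_add_star ℂ, hY.exp_add_star ℂ, h]
  rw [(IsSelfAdjoint.add_star_self X).exp_inj (IsSelfAdjoint.add_star_self Y) hexp]
end
end

section
/- Let X and Y be bounded normal operators on a complex Hilbert space with spectra contained in the strip S = {z : |Im z| ≤ π}. If E_X(Ω) = E_Y(Ω) for all Borel subsets Ω of the open strip S°, and Re(X) = Re(Y), then e^X = e^Y. -/
open MeasureTheory Complex ContinuousLinearMap NormedSpace

noncomputable section

variable {H : Type*} [NormedAddCommGroup H] [InnerProductSpace ℂ H] [CompleteSpace H]

/-! Split `X = X E(S°) + X E(S°ᶜ)` along the spectral projection of the open strip; the two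
summands commute, so `e^X = e^{X E(S°)} e^{X E(S°ᶜ)}`. The interior parts of `X` and `Y` coincide
because their spectral measures agree on `S°`. Outside `S°` the spectrum lies on the two lines
`Im z = ±π`, on whose spectral subspaces `X - Re X` is the scalar `∓iπ`; as `e^{±iπ} = -1`, this
gives `e^{X E(S°ᶜ)} = e^{Re X · E(S°ᶜ)} (1 - 2 E(S°ᶜ))`, which only depends on `Re X` and on
`E(S°ᶜ) = 1 - E(S°)`, and these are the same for `X` and `Y`. -/

section BanachAlgebra

variable {A : Type*} [NormedRing A] [NormedAlgebra ℂ A] [CompleteSpace A]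

theorem exp_smul_of_isIdempotentElem {P : A} (hP : IsIdempotentElem P) (c : ℂ) :
    NormedSpace.exp (c • P) = 1 + (Complex.exp c - 1) • P := by
  -- the `0 ^ n` term repairs `n = 0`, so that the series splits into two exponential series
  have hpow : ∀ n : ℕ, (c • P) ^ n = c ^ n • P + (0 : ℂ) ^ n • (1 - P) := by
    rintro (_ | n)
    · simp
    · rw [smul_pow, hP.pow_succ_eq, zero_pow n.succ_ne_zero, zero_smul, add_zero]
  have hsum := ((exp_series_hasSum_exp' (𝕂 := ℂ) c).smul_const P).add
    ((exp_series_hasSum_exp' (𝕂 := ℂ) (0 : ℂ)).smul_const (1 - P))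
  simp only [smul_assoc, ← smul_add, ← hpow] at hsum
  rw [(exp_series_hasSum_exp' (𝕂 := ℂ) (c • P)).unique hsum, NormedSpace.exp_zero,
    ← Complex.exp_eq_exp_ℂ]
  module

theorem exp_smul_add_smul_of_mul_eq_zero {P Q : A} (hP : IsIdempotentElem P)
    (hQ : IsIdempotentElem Q) (hPQ : P * Q = 0) (hQP : Q * P = 0) (a b : ℂ) :
    NormedSpace.exp (a • P + b • Q) = 1 + (Complex.exp a - 1) • P + (Complex.exp b - 1) • Q := by
  let +nondep : NormedAlgebra ℚ A := .restrictScalars ℚ ℂ A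
  have hcomm : Commute (a • P) (b • Q) :=
    ((show Commute P Q from hPQ.trans hQP.symm).smul_left a).smul_right b
  rw [exp_add_of_commute hcomm, exp_smul_of_isIdempotentElem hP,
    exp_smul_of_isIdempotentElem hQ, mul_add, add_mul, add_mul, smul_mul_smul_comm, hPQ]
  simp only [mul_one, one_mul, smul_zero, add_zero]

theorem exp_eq_exp_mul_mul_exp_mul_sub {x p : A} (h : Commute x p) :
    NormedSpace.exp x = NormedSpace.exp (x * p) * NormedSpace.exp (x * (1 - p)) := by
  let +nondep : NormedAlgebra ℚ A := .restrictScalars ℚ ℂ A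
  have hcomm : Commute (x * p) (x * (1 - p)) := by
    rw [mul_sub, mul_one]
    exact ((Commute.refl x).mul_left h.symm).sub_right (Commute.refl _)
  rw [← exp_add_of_commute hcomm, ← mul_add, add_sub_cancel, mul_one]

end BanachAlgebra

namespace IsPVM

variable {α : Type*} [MeasurableSpace α] {E : Set α → H →L[ℂ] H} {s t : Set α}

open scoped Classical in
def vectorMeasure (hE : IsPVM E) (x : H) : VectorMeasure α H where
  measureOf' s := if MeasurableSet s then E s x else 0
  empty' := by simp [hE.empty]
  not_measurable' _ hs := if_neg hs
  m_iUnion' f hf hdisj := by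
    simpa only [hf, MeasurableSet.iUnion hf, if_true] using hE.countablyAdditive f hf hdisj x

theorem union (hE : IsPVM E) (hs : MeasurableSet s) (ht : MeasurableSet t) (hst : Disjoint s t) :
    E (s ∪ t) = E s + E t := by
  ext x
  simpa [vectorMeasure, hs, ht, hs.union ht] using (hE.vectorMeasure x).of_union hst hs ht

theorem compl (hE : IsPVM E) (hs : MeasurableSet s) : E sᶜ = 1 - E s := by
  rw [eq_sub_iff_add_eq', ← hE.union hs hs.compl disjoint_compl_right, Set.union_compl_self,
    hE.univ]

theorem apply_add_apply_compl (hE : IsPVM E) (hs : MeasurableSet s) (x : H) :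
    E s x + E sᶜ x = x := by
  rw [hE.compl hs, sub_apply, one_apply_eq_self, add_sub_cancel]

theorem apply_apply (hE : IsPVM E) (hs : MeasurableSet s) (ht : MeasurableSet t) (x : H) :
    E s (E t x) = E (s ∩ t) x := by
  rw [hE.inter s t hs ht, mul_apply_eq_comp]

theorem isIdempotentElem (hE : IsPVM E) (hs : MeasurableSet s) : IsIdempotentElem (E s) := by
  rw [IsIdempotentElem, ← hE.inter s s hs hs, Set.inter_self]

theorem mul_eq_zero_of_disjoint (hE : IsPVM E) (hs : MeasurableSet s) (ht : MeasurableSet t)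
    (hst : Disjoint s t) : E s * E t = 0 := by
  rw [← hE.inter s t hs ht, hst.inter_eq, hE.empty]

theorem commute (hE : IsPVM E) (hs : MeasurableSet s) (ht : MeasurableSet t) :
    Commute (E s) (E t) := by
  rw [Commute, SemiconjBy, ← hE.inter s t hs ht, ← hE.inter t s ht hs, Set.inter_comm]

theorem inner_map_left (hE : IsPVM E) (s : Set α) (x y : H) :
    inner ℂ (E s x) y = inner ℂ x (E s y) :=
  (hE.selfAdjoint s).isSymmetric x y

theorem inner_apply_self (hE : IsPVM E) (hs : MeasurableSet s) (x : H) :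
    inner ℂ (E s x) x = ((‖E s x‖ ^ 2 : ℝ) : ℂ) := by
  calc inner ℂ (E s x) x = inner ℂ (E s (E s x)) x := by
        rw [hE.apply_apply hs hs, Set.inter_self]
    _ = inner ℂ (E s x) (E s x) := hE.inner_map_left s _ _
    _ = ((‖E s x‖ ^ 2 : ℝ) : ℂ) := by rw [inner_self_eq_norm_sq_to_K]; push_cast; rfl

theorem inner_apply_apply_of_disjoint (hE : IsPVM E) (hs : MeasurableSet s)
    (ht : MeasurableSet t) (hst : Disjoint s t) (x y : H) :
    inner ℂ (E s x) (E t y) = 0 := by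
  rw [hE.inner_map_left, hE.apply_apply hs ht, hst.inter_eq, hE.empty, zero_apply,
    inner_zero_right]

end IsPVM

open scoped ComplexConjugate

section InnerProductSpace

variable {V : Type*} [NormedAddCommGroup V] [InnerProductSpace ℂ V]

theorem ContinuousLinearMap.ext_inner_apply_self {S T : V →L[ℂ] V}
    (h : ∀ x, inner ℂ (S x) x = inner ℂ (T x) x) : S = T :=
  coe_injective ((ext_inner_map _ _).mp h)

theorem inner_eq_zero_of_inner_apply_add_smul {T : V →L[ℂ] V} {a b : V}
    (h : ∀ c : ℂ, ‖c‖ = 1 →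
      inner ℂ (T (a + c • b)) (a + c • b) = inner ℂ (T a) a + inner ℂ (T b) b) :
    inner ℂ (T a) b = 0 ∧ inner ℂ (T b) a = 0 := by
  have h1 := h 1 (by simp)
  have hI := h I (by simp)
  simp only [one_smul, map_add, map_smul, inner_add_left, inner_add_right, inner_smul_left,
    inner_smul_right, conj_I] at h1 hI
  constructor
  · linear_combination h1 / 2 - I * hI / 2 +
      ((inner ℂ (T a) b - inner ℂ (T b) a) / 2 - I * inner ℂ (T b) b / 2) * I_sq
  · linear_combination h1 / 2 + I * hI / 2 -
      ((inner ℂ (T a) b - inner ℂ (T b) a) / 2 - I * inner ℂ (T b) b / 2) * I_sq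

theorem inner_realPart_mul_apply [CompleteSpace V] {T S : V →L[ℂ] V} (hTS : Commute T S)
    (hS : IsSelfAdjoint S) (x : V) :
    inner ℂ (((2⁻¹ : ℂ) • (T + adjoint T) * S) x) x = ((inner ℂ ((T * S) x) x).re : ℂ) := by
  have hadj : inner ℂ ((adjoint T * S) x) x = conj (inner ℂ ((T * S) x) x) := by
    rw [mul_apply_eq_comp, adjoint_inner_left, inner_conj_symm, hTS.eq, mul_apply_eq_comp]
    exact hS.isSymmetric x (T x)
  rw [smul_mul_assoc, add_mul, smul_apply, add_apply, inner_smul_left, inner_add_left, hadj,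
    Complex.add_conj, map_inv₀, map_ofNat]
  push_cast
  ring

namespace IsDiagMeasure

variable {α : Type*} [MeasurableSpace α] {E : Set α → V →L[ℂ] V} {x : V} {μ ν : Measure α}

theorem unique (hμ : IsDiagMeasure E x μ) (hν : IsDiagMeasure E x ν) : μ = ν :=
  Measure.ext fun s hs => by rw [hμ s hs, hν s hs]

theorem isFiniteMeasure (hμ : IsDiagMeasure E x μ) : IsFiniteMeasure μ :=
  ⟨by rw [hμ _ MeasurableSet.univ]; exact ENNReal.ofReal_lt_top⟩

end IsDiagMeasure

end InnerProductSpace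

namespace IsDiagMeasure

variable {α : Type*} [MeasurableSpace α] {E : Set α → H →L[ℂ] H} {x : H} {μ : Measure α} {s : Set α}

theorem restrict (hE : IsPVM E) (hμ : IsDiagMeasure E x μ) (hs : MeasurableSet s) :
    IsDiagMeasure E (E s x) (μ.restrict s) := by
  intro t ht
  rw [Measure.restrict_apply ht, hμ _ (ht.inter hs), hE.inner_apply_self ht,
    hE.inner_apply_self (ht.inter hs), hE.apply_apply ht hs]

theorem add_smul_compl (hE : IsPVM E) (hμ : IsDiagMeasure E x μ) (hs : MeasurableSet s)
    {c : ℂ} (hc : ‖c‖ = 1) : IsDiagMeasure E (E s x + c • E sᶜ x) μ := by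
  intro t ht
  have horth : inner ℂ (E (t ∩ s) x) (E (t ∩ sᶜ) x) = 0 :=
    hE.inner_apply_apply_of_disjoint (ht.inter hs) (ht.inter hs.compl)
      (disjoint_compl_right.mono Set.inter_subset_right Set.inter_subset_right) x x
  have hsplit : E t x = E (t ∩ s) x + E (t ∩ sᶜ) x := by
    rw [← hE.apply_apply ht hs, ← hE.apply_apply ht hs.compl, ← map_add,
      hE.apply_add_apply_compl hs]
  rw [hμ t ht, hE.inner_apply_self ht, hE.inner_apply_self ht, map_add, map_smul,
    hE.apply_apply ht hs, hE.apply_apply ht hs.compl, hsplit,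
    norm_add_sq (𝕜 := ℂ), norm_add_sq (𝕜 := ℂ), inner_smul_right, horth, mul_zero, norm_smul, hc,
    one_mul]

end IsDiagMeasure

theorem measurableSet_line (t : ℝ) : MeasurableSet {z : ℂ | z.im = t} :=
  (isClosed_eq continuous_im continuous_const).measurableSet

theorem disjoint_line {t u : ℝ} (h : t ≠ u) : Disjoint {z : ℂ | z.im = t} {z : ℂ | z.im = u} :=
  Set.disjoint_left.2 fun _ (h₁ : _ = t) (h₂ : _ = u) => h (h₁.symm.trans h₂)

namespace IsSpectralMeasureOf

variable {X : H →L[ℂ] H} {E : Set ℂ → H →L[ℂ] H} {x : H} {μ : Measure ℂ} {s : Set ℂ}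

theorem inner_apply_self_eq_integral (hE : IsSpectralMeasureOf X E) (hμ : IsDiagMeasure E x μ) :
    inner ℂ (X x) x = ∫ z, z ∂μ := by
  obtain ⟨ν, hν, hX⟩ := hE.2.1 x
  rw [hX, hμ.unique hν]
  rfl

theorem ae_mem_spectrum (hE : IsSpectralMeasureOf X E) (hμ : IsDiagMeasure E x μ) :
    ∀ᵐ z ∂μ, z ∈ spectrum ℂ X := by
  have hσ : MeasurableSet (spectrum ℂ X)ᶜ := (spectrum.isClosed X).measurableSet.compl
  change μ (spectrum ℂ X)ᶜ = 0
  rw [hμ _ hσ, hE.2.2 _ hσ, Set.compl_inter_self, hE.1.empty, zero_apply, inner_zero_left,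
    zero_re, ENNReal.ofReal_zero]

theorem integrable_id (hE : IsSpectralMeasureOf X E) (hμ : IsDiagMeasure E x μ) :
    Integrable (fun z : ℂ => z) μ := by
  have := hμ.isFiniteMeasure
  refine (integrable_const (‖X‖ * ‖(1 : H →L[ℂ] H)‖)).mono' aestronglyMeasurable_id ?_
  filter_upwards [hE.ae_mem_spectrum hμ] with z hz using spectrum.norm_le_norm_mul_of_mem hz

theorem inner_apply_add_smul_compl (hE : IsSpectralMeasureOf X E) (hs : MeasurableSet s)
    (x : H) {c : ℂ} (hc : ‖c‖ = 1) :
    inner ℂ (X (E s x + c • E sᶜ x)) (E s x + c • E sᶜ x) =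
      inner ℂ (X (E s x)) (E s x) + inner ℂ (X (E sᶜ x)) (E sᶜ x) := by
  obtain ⟨μ, hμ, -⟩ := hE.2.1 x
  rw [hE.inner_apply_self_eq_integral (hμ.add_smul_compl hE.1 hs hc),
    hE.inner_apply_self_eq_integral (hμ.restrict hE.1 hs),
    hE.inner_apply_self_eq_integral (hμ.restrict hE.1 hs.compl),
    integral_add_compl hs (hE.integrable_id hμ)]

theorem inner_apply_compl_eq_zero (hE : IsSpectralMeasureOf X E) (hs : MeasurableSet s) (x : H) :
    inner ℂ (X (E s x)) (E sᶜ x) = 0 ∧ inner ℂ (X (E sᶜ x)) (E s x) = 0 :=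
  inner_eq_zero_of_inner_apply_add_smul fun _ hc => hE.inner_apply_add_smul_compl hs x hc

theorem inner_mul_apply_self (hE : IsSpectralMeasureOf X E) (hs : MeasurableSet s) (x : H) :
    inner ℂ ((X * E s) x) x = inner ℂ (X (E s x)) (E s x) :=
  calc inner ℂ ((X * E s) x) x = inner ℂ (X (E s x)) (E s x + E sᶜ x) := by
        rw [hE.1.apply_add_apply_compl hs, mul_apply_eq_comp]
    _ = inner ℂ (X (E s x)) (E s x) := by
        rw [inner_add_right, (hE.inner_apply_compl_eq_zero hs x).1, add_zero]

theorem commute (hE : IsSpectralMeasureOf X E) (hs : MeasurableSet s) : Commute X (E s) := by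
  refine ext_inner_apply_self fun x => (hE.inner_mul_apply_self hs x).trans ?_
  calc inner ℂ (X (E s x)) (E s x) = inner ℂ (X (E s x + E sᶜ x)) (E s x) := by
        rw [map_add, inner_add_left, (hE.inner_apply_compl_eq_zero hs x).2, add_zero]
    _ = inner ℂ ((E s * X) x) x := by
        rw [mul_apply_eq_comp, hE.1.inner_map_left, hE.1.apply_add_apply_compl hs]

theorem commute_realPart (hE : IsSpectralMeasureOf X E) (hs : MeasurableSet s) :
    Commute ((2⁻¹ : ℂ) • (X + adjoint X)) (E s) := by
  have hadj := (hE.commute hs).star_star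
  rw [star_eq_adjoint, (hE.1.selfAdjoint s).star_eq] at hadj
  exact ((hE.commute hs).add_left hadj).smul_left _

theorem inner_mul_apply_eq_setIntegral (hE : IsSpectralMeasureOf X E) (hμ : IsDiagMeasure E x μ)
    (hs : MeasurableSet s) : inner ℂ ((X * E s) x) x = ∫ z in s, z ∂μ := by
  rw [hE.inner_mul_apply_self hs, hE.inner_apply_self_eq_integral (hμ.restrict hE.1 hs)]

-- The inner product is conjugate-linear in its first argument, so `IsIntegralOf E id X` makes `X`
-- act as `conj z` on the spectral subspaces; hence `-(t * I)` rather than `t * I`.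
theorem mul_line (hE : IsSpectralMeasureOf X E) (t : ℝ) :
    X * E {z | z.im = t} =
      (2⁻¹ : ℂ) • (X + adjoint X) * E {z | z.im = t} + (-(t * I)) • E {z | z.im = t} := by
  have hL := measurableSet_line t
  refine ext_inner_apply_self fun x => ?_
  obtain ⟨μ, hμ, -⟩ := hE.2.1 x
  have hw := hE.inner_mul_apply_eq_setIntegral hμ hL
  have him : (inner ℂ ((X * E {z | z.im = t}) x) x).im = t * μ.real {z | z.im = t} := by
    rw [hw, ← RCLike.im_to_complex, ← integral_im (hE.integrable_id hμ).integrableOn,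
      setIntegral_congr_fun (f := fun z : ℂ => RCLike.im z) (g := fun _ => t) hL fun z hz => hz,
      setIntegral_const, smul_eq_mul, mul_comm]
  have hEL : inner ℂ (E {z | z.im = t} x) x = μ.real {z | z.im = t} := by
    rw [hE.1.inner_apply_self hL, measureReal_def, hμ _ hL, hE.1.inner_apply_self hL, ofReal_re,
      ENNReal.toReal_ofReal (sq_nonneg _)]
  rw [add_apply, inner_add_left, inner_realPart_mul_apply (hE.commute hL) (hE.1.selfAdjoint _),
    smul_apply, inner_smul_left, hEL]
  rw [mul_apply_eq_comp] at him
  apply Complex.ext <;> simp [him]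

theorem exp_eq_exp_mul_mul_exp_mul_compl (hE : IsSpectralMeasureOf X E) (hs : MeasurableSet s) :
    NormedSpace.exp X = NormedSpace.exp (X * E s) * NormedSpace.exp (X * E sᶜ) := by
  rw [hE.1.compl hs]
  exact exp_eq_exp_mul_mul_exp_mul_sub (hE.commute hs)

theorem mul_eq_mul_of_eq_on_subsets {Y : H →L[ℂ] H} {EX EY : Set ℂ → H →L[ℂ] H}
    (hEX : IsSpectralMeasureOf X EX) (hEY : IsSpectralMeasureOf Y EY)
    {Ω : Set ℂ} (hΩ : MeasurableSet Ω) (h : ∀ s, MeasurableSet s → s ⊆ Ω → EX s = EY s) :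
    X * EX Ω = Y * EY Ω := by
  refine ext_inner_apply_self fun x => ?_
  obtain ⟨μ, hμ, -⟩ := hEX.2.1 x
  obtain ⟨ν, hν, -⟩ := hEY.2.1 x
  have hμν : μ.restrict Ω = ν.restrict Ω := Measure.ext fun s hs => by
    rw [Measure.restrict_apply hs, Measure.restrict_apply hs, hμ _ (hs.inter hΩ),
      hν _ (hs.inter hΩ), h _ (hs.inter hΩ) Set.inter_subset_right]
  rw [hEX.inner_mul_apply_eq_setIntegral hμ hΩ, hEY.inner_mul_apply_eq_setIntegral hν hΩ, hμν]

end IsSpectralMeasureOf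

section Strip

open Real

variable {X : H →L[ℂ] H} {E : Set ℂ → H →L[ℂ] H}

theorem measurableSet_openStrip : MeasurableSet {z : ℂ | |z.im| < π} :=
  (isOpen_lt continuous_im.abs continuous_const).measurableSet

theorem IsSpectralMeasureOf.compl_openStrip (hE : IsSpectralMeasureOf X E)
    (hs : spectrum ℂ X ⊆ {z : ℂ | |z.im| ≤ π}) :
    E {z : ℂ | |z.im| < π}ᶜ = E {z : ℂ | z.im = π} + E {z : ℂ | z.im = -π} := by
  rw [← hE.1.union (measurableSet_line π) (measurableSet_line (-π))
      (disjoint_line (neg_lt_self pi_pos).ne'),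
    hE.2.2 _ measurableSet_openStrip.compl,
    hE.2.2 _ ((measurableSet_line π).union (measurableSet_line (-π)))]
  refine congrArg E (Set.ext fun z => and_congr_left fun hz => ?_)
  change ¬|z.im| < π ↔ z.im = π ∨ z.im = -π
  rw [not_lt, ← abs_eq pi_pos.le]
  exact ⟨(hs hz).antisymm, ge_of_eq⟩

theorem IsSpectralMeasureOf.exp_mul_compl_openStrip (hE : IsSpectralMeasureOf X E)
    (hs : spectrum ℂ X ⊆ {z : ℂ | |z.im| ≤ π}) :
    NormedSpace.exp (X * E {z : ℂ | |z.im| < π}ᶜ) =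
      NormedSpace.exp ((2⁻¹ : ℂ) • (X + adjoint X) * E {z : ℂ | |z.im| < π}ᶜ) *
        (1 - (2 : ℂ) • E {z : ℂ | |z.im| < π}ᶜ) := by
  let +nondep : NormedAlgebra ℚ (H →L[ℂ] H) := .restrictScalars ℚ ℂ (H →L[ℂ] H)
  set R := (2⁻¹ : ℂ) • (X + adjoint X)
  set S := {z : ℂ | |z.im| < π}ᶜ
  have hS : MeasurableSet S := measurableSet_openStrip.compl
  have hP := measurableSet_line π
  have hQ := measurableSet_line (-π)
  set D := (-(π * I)) • E {z : ℂ | z.im = π} + (-((-π : ℝ) * I)) • E {z : ℂ | z.im = -π}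
  have hdecomp : X * E S = R * E S + D := by
    rw [hE.compl_openStrip hs, mul_add, hE.mul_line, hE.mul_line, mul_add, add_add_add_comm]
  have hcomm : Commute (R * E S) D :=
    ((((hE.commute_realPart hP).mul_left (hE.1.commute hS hP)).smul_right _).add_right
      (((hE.commute_realPart hQ).mul_left (hE.1.commute hS hQ)).smul_right _))
  have hexpD : NormedSpace.exp D = 1 - (2 : ℂ) • E S := by
    have hPQ := disjoint_line (neg_lt_self pi_pos).ne'
    rw [exp_smul_add_smul_of_mul_eq_zero (hE.1.isIdempotentElem hP) (hE.1.isIdempotentElem hQ)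
      (hE.1.mul_eq_zero_of_disjoint hP hQ hPQ) (hE.1.mul_eq_zero_of_disjoint hQ hP hPQ.symm),
      hE.compl_openStrip hs]
    have hexp : Complex.exp (-(π * I)) = -1 := by rw [Complex.exp_neg, exp_pi_mul_I]; norm_num
    push_cast
    rw [neg_mul, neg_neg, hexp, exp_pi_mul_I]
    module
  rw [hdecomp, exp_add_of_commute hcomm, hexpD]

end Strip

theorem stmt3_general (X Y : H →L[ℂ] H)
    (EX EY : Set ℂ → H →L[ℂ] H)
    (hEX : IsSpectralMeasureOf X EX) (hEY : IsSpectralMeasureOf Y EY)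
    (hsX : spectrum ℂ X ⊆ {z : ℂ | |z.im| ≤ Real.pi})
    (hsY : spectrum ℂ Y ⊆ {z : ℂ | |z.im| ≤ Real.pi})
    (hmeas : ∀ Ω : Set ℂ, MeasurableSet Ω → Ω ⊆ {z : ℂ | |z.im| < Real.pi} → EX Ω = EY Ω)
    (hre : (2⁻¹ : ℂ) • (X + adjoint X) = (2⁻¹ : ℂ) • (Y + adjoint Y)) :
    NormedSpace.exp X = NormedSpace.exp Y := by
  have hcompl : EX {z : ℂ | |z.im| < Real.pi}ᶜ = EY {z : ℂ | |z.im| < Real.pi}ᶜ := by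
    rw [hEX.1.compl measurableSet_openStrip, hEY.1.compl measurableSet_openStrip,
      hmeas _ measurableSet_openStrip subset_rfl]
  rw [hEX.exp_eq_exp_mul_mul_exp_mul_compl measurableSet_openStrip,
    hEY.exp_eq_exp_mul_mul_exp_mul_compl measurableSet_openStrip,
    hEX.mul_eq_mul_of_eq_on_subsets hEY measurableSet_openStrip hmeas,
    hEX.exp_mul_compl_openStrip hsX, hEY.exp_mul_compl_openStrip hsY, hcompl, hre]

/-- Normal `X, Y` with spectra in the strip `|Im z| ≤ π`, whose
spectral measures agree on Borel subsets of the open strip and whose real parts are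
equal, satisfy `e^X = e^Y`. -/
theorem stmt3 (X Y : H →L[ℂ] H) (hX : IsStarNormal X) (hY : IsStarNormal Y)
    (EX EY : Set ℂ → H →L[ℂ] H)
    (hEX : IsSpectralMeasureOf X EX) (hEY : IsSpectralMeasureOf Y EY)
    (hsX : spectrum ℂ X ⊆ {z : ℂ | |z.im| ≤ Real.pi})
    (hsY : spectrum ℂ Y ⊆ {z : ℂ | |z.im| ≤ Real.pi})
    (hmeas : ∀ Ω : Set ℂ, MeasurableSet Ω → Ω ⊆ {z : ℂ | |z.im| < Real.pi} → EX Ω = EY Ω)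
    (hre : (2⁻¹ : ℂ) • (X + adjoint X) = (2⁻¹ : ℂ) • (Y + adjoint Y)) :
    NormedSpace.exp X = NormedSpace.exp Y :=
  stmt3_general X Y EX EY hEX hEY hsX hsY hmeas hre
end
end

section
/- Let X and Y be bounded normal operators on a complex Hilbert space with spectra contained in the strip S = {z : |Im z| ≤ π}. If e^X = e^Y, then |X| = |Y|, where |T| = (T*T)^{1/2}. -/
open MeasureTheory Complex ContinuousLinearMap NormedSpace

noncomputable section

variable {H : Type*} [NormedAddCommGroup H] [InnerProductSpace ℂ H] [CompleteSpace H]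

/-!
For `z` in the strip `|Im z| ≤ π`, the modulus `|z|` can be read off `w = e^z` alone:
`log |w| = Re z` and `arccos (Re w / |w|) = |Im z|`, and this recipe is continuous on `ℂ ∖ {0}`.
Applying it through the continuous functional calculus to `e^X` recovers `|X| = cfc (‖·‖) X`,
so `|X|` depends only on `e^X`.
-/

namespace Complex

def normOfExpInStrip (w : ℂ) : ℝ :=
  √(Real.log ‖w‖ ^ 2 + Real.arccos (w.re / ‖w‖) ^ 2)

lemma normOfExpInStrip_exp {z : ℂ} (hz : |z.im| ≤ Real.pi) :
    normOfExpInStrip (exp z) = ‖z‖ := by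
  have h_cos : (exp z).re / ‖exp z‖ = Real.cos |z.im| := by
    rw [exp_re, norm_exp, Real.cos_abs]
    field_simp
  rw [normOfExpInStrip, h_cos, Real.arccos_cos (abs_nonneg _) hz, norm_exp, Real.log_exp,
    _root_.sq_abs, norm_def, normSq_apply, ← sq, ← sq]

lemma continuousOn_normOfExpInStrip : ContinuousOn normOfExpInStrip {0}ᶜ := by
  intro w hw
  have hw' : ‖w‖ ≠ 0 := norm_ne_zero_iff.mpr hw
  refine ContinuousAt.continuousWithinAt (Real.continuous_sqrt.continuousAt.comp ?_)
  exact (((Real.continuousAt_log hw').comp continuous_norm.continuousAt).pow 2).add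
    ((Real.continuous_arccos.continuousAt.comp
      (continuous_re.continuousAt.div continuous_norm.continuousAt hw')).pow 2)

end Complex

lemma CFC.abs_eq_cfc_normOfExpInStrip_exp {A : Type*} [CStarAlgebra A] [PartialOrder A]
    [StarOrderedRing A] (a : A) (ha : IsStarNormal a)
    (hs : spectrum ℂ a ⊆ {z : ℂ | |z.im| ≤ Real.pi}) :
    CFC.abs a = cfc (fun w ↦ (Complex.normOfExpInStrip w : ℂ)) (NormedSpace.exp a) := by
  have h_cont : ContinuousOn (fun w ↦ (Complex.normOfExpInStrip w : ℂ))
      (Complex.exp '' spectrum ℂ a) := by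
    refine (Complex.continuous_ofReal.comp_continuousOn
      Complex.continuousOn_normOfExpInStrip).mono ?_
    rintro _ ⟨z, -, rfl⟩
    exact Complex.exp_ne_zero z
  rw [CFC.abs_eq_cfcₙ_coe_norm ℂ a, cfcₙ_eq_cfc, ← CFC.complex_exp_eq_normedSpace_exp,
    ← cfc_comp _ _ a]
  exact cfc_congr fun z hz ↦ by simp [Complex.normOfExpInStrip_exp (hs hz)]

/-- Normal `X, Y` with spectra in the strip `|Im z| ≤ π` and
`e^X = e^Y` satisfy `|X| = |Y|`, where `|T| = (T*T)^{1/2}`. -/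
theorem stmt5 (X Y : H →L[ℂ] H) (hX : IsStarNormal X) (hY : IsStarNormal Y)
    (hsX : spectrum ℂ X ⊆ {z : ℂ | |z.im| ≤ Real.pi})
    (hsY : spectrum ℂ Y ⊆ {z : ℂ | |z.im| ≤ Real.pi})
    (h : NormedSpace.exp X = NormedSpace.exp Y) :
    CFC.sqrt (adjoint X * X) = CFC.sqrt (adjoint Y * Y) := by
  simp only [← star_eq_adjoint]
  change CFC.abs X = CFC.abs Y
  rw [CFC.abs_eq_cfc_normOfExpInStrip_exp X hX hsX,
    CFC.abs_eq_cfc_normOfExpInStrip_exp Y hY hsY, h]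
end
end

section
/- Let X and Y be bounded normal operators on a complex Hilbert space with spectra contained in the strip {z : |Im z| ≤ π}, satisfying e^X = e^Y. Then |Im(X)| = |Im(Y)|, where Im(T) = (T − T*)/2 and |A| denotes the modulus of the operator A. -/
/-!
By the continuous functional calculus, `|Im a| = f(a)` with `f z = |Im z|`. On the strip
`|Im z| ≤ π` this is `g (exp z)` for `g w = arccos (Re w / ‖w‖)` (the angle of `w` measured from
the positive real axis), which is continuous away from `0`. Hence `|Im a| = g (exp a)` depends only
on `exp a`.
-/

open MeasureTheory Complex ContinuousLinearMap NormedSpace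

noncomputable section

variable {H : Type*} [NormedAddCommGroup H] [InnerProductSpace ℂ H] [CompleteSpace H]

lemma Complex.arccos_re_exp_div_norm_exp {z : ℂ} (hz : |z.im| ≤ Real.pi) :
    Real.arccos ((exp z).re / ‖exp z‖) = |z.im| := by
  rw [norm_exp, exp_re, mul_div_cancel_left₀ _ (Real.exp_ne_zero _), ← Real.cos_abs,
    Real.arccos_cos (abs_nonneg _) hz]

lemma Complex.continuousOn_arccos_re_div_norm {s : Set ℂ} (hs : (0 : ℂ) ∉ s) :
    ContinuousOn (fun w : ℂ => ((Real.arccos (w.re / ‖w‖) : ℝ) : ℂ)) s :=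
  continuous_ofReal.comp_continuousOn <| Real.continuous_arccos.comp_continuousOn <|
    continuous_re.continuousOn.div continuous_norm.continuousOn
      fun _ hw => norm_ne_zero_iff.mpr (ne_of_mem_of_not_mem hw hs)

namespace CStarAlgebra

variable {A : Type*} [CStarAlgebra A]

lemma smul_sub_star_eq_cfc (a : A) [IsStarNormal a] :
    (2⁻¹ : ℂ) • (a - star a) = cfc (fun z : ℂ => 2⁻¹ * (z - star z)) a := by
  rw [cfc_const_mul _ _ a, cfc_sub _ _ a, cfc_id' ℂ a, cfc_star_id (a := a)]

lemma star_mul_self_smul_sub_star_eq_cfc (a : A) [IsStarNormal a] :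
    star ((2⁻¹ : ℂ) • (a - star a)) * ((2⁻¹ : ℂ) • (a - star a)) =
      cfc (fun z : ℂ => ((z.im ^ 2 : ℝ) : ℂ)) a := by
  rw [smul_sub_star_eq_cfc, ← cfc_star (fun z : ℂ => 2⁻¹ * (z - star z)) a, ← cfc_mul _ _ a]
  refine cfc_congr fun z _ => ?_
  rw [Complex.star_def, Complex.sub_conj]
  push_cast
  simp only [map_mul, Complex.conj_ofReal, Complex.conj_I, map_inv₀, map_ofNat]
  linear_combination -(z.im : ℂ) ^ 2 * Complex.I_sq

variable [PartialOrder A] [StarOrderedRing A]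

open scoped ComplexOrder in
lemma sqrt_cfc_im_sq (a : A) [IsStarNormal a] :
    CFC.sqrt (cfc (fun z : ℂ => ((z.im ^ 2 : ℝ) : ℂ)) a) =
      cfc (fun z : ℂ => ((|z.im| : ℝ) : ℂ)) a := by
  refine CFC.sqrt_unique ?_ (cfc_nonneg fun z _ => ?_)
  · rw [← cfc_mul ..]
    refine cfc_congr fun z _ => ?_
    rw [← Complex.ofReal_mul, abs_mul_abs_self, sq]
  · exact_mod_cast abs_nonneg z.im

lemma sqrt_star_mul_self_smul_sub_star_eq_cfc_exp (a : A) [IsStarNormal a]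
    (ha : spectrum ℂ a ⊆ {z : ℂ | |z.im| ≤ Real.pi}) :
    CFC.sqrt (star ((2⁻¹ : ℂ) • (a - star a)) * ((2⁻¹ : ℂ) • (a - star a))) =
      cfc (fun w : ℂ => ((Real.arccos (w.re / ‖w‖) : ℝ) : ℂ)) (NormedSpace.exp a) := by
  have hexp : (0 : ℂ) ∉ Complex.exp '' spectrum ℂ a := fun ⟨z, _, hz⟩ => Complex.exp_ne_zero z hz
  rw [star_mul_self_smul_sub_star_eq_cfc, sqrt_cfc_im_sq, ← CFC.complex_exp_eq_normedSpace_exp,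
    ← cfc_comp' _ _ a (Complex.continuousOn_arccos_re_div_norm hexp)]
  exact cfc_congr fun z hz => by rw [Complex.arccos_re_exp_div_norm_exp (ha hz)]

end CStarAlgebra

/-- Normal `X, Y` with spectra in the strip `|Im z| ≤ π` and
`e^X = e^Y` satisfy `|Im X| = |Im Y|`, where `Im T = (T − T*)/2`. -/
theorem stmt16 (X Y : H →L[ℂ] H) (hX : IsStarNormal X) (hY : IsStarNormal Y)
    (hsX : spectrum ℂ X ⊆ {z : ℂ | |z.im| ≤ Real.pi})
    (hsY : spectrum ℂ Y ⊆ {z : ℂ | |z.im| ≤ Real.pi})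
    (h : NormedSpace.exp X = NormedSpace.exp Y) :
    CFC.sqrt (adjoint ((2⁻¹ : ℂ) • (X - adjoint X)) * ((2⁻¹ : ℂ) • (X - adjoint X))) =
      CFC.sqrt (adjoint ((2⁻¹ : ℂ) • (Y - adjoint Y)) * ((2⁻¹ : ℂ) • (Y - adjoint Y))) := by
  simp only [← star_eq_adjoint]
  rw [CStarAlgebra.sqrt_star_mul_self_smul_sub_star_eq_cfc_exp X hsX,
    CStarAlgebra.sqrt_star_mul_self_smul_sub_star_eq_cfc_exp Y hsY, h]
end
end
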